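/- Let V₁ and V₃ be 2×2 complex unitary matrices satisfying V₃·V₁·|0⟩⟨0|·V₁†·V₃† = |0⟩⟨0| and V₃·σx·V₁·|0⟩⟨0|·V₁†·σx·V₃† = |0⟩⟨0|. Then σx·V₁·|0⟩⟨0|·V₁†·σx = V₁·|0⟩⟨0|·V₁†, and consequently V₁·|0⟩⟨0|·V₁† = |+⟩⟨+| or V₁·|0⟩⟨0|·V₁† = |−⟩⟨−|. -/

import Mathlib

open Matrix

noncomputable section

def σx : Matrix (Fin 2) (Fin 2) ℂ := !![0, 1; 1, 0]

/-- The projector |0⟩⟨0|. -/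
def P0 : Matrix (Fin 2) (Fin 2) ℂ := !![1, 0; 0, 0]

/-- The projector |+⟩⟨+|. -/
def Pplus : Matrix (Fin 2) (Fin 2) ℂ := !![1/2, 1/2; 1/2, 1/2]

/-- The projector |−⟩⟨−|. -/
def Pminus : Matrix (Fin 2) (Fin 2) ℂ := !![1/2, -(1/2); -(1/2), 1/2]

/-! Both hypotheses say that conjugation by `V₃` sends `ρ = V₁ P0 V₁ᴴ` and `σx ρ σx` to `P0`,
so `σx ρ σx = ρ`. A `σx`-invariant 2×2 matrix has the form `[[s, r], [r, s]]`; since `ρ` is an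
idempotent of trace one, `s = 1/2` and `r² = 1/4`, i.e. `ρ` is `|+⟩⟨+|` or `|−⟩⟨−|`. -/

lemma eq_of_conj_eq_conj_of_mem_unitary {R : Type*} [Monoid R] [StarMul R] {u a b : R}
    (hu : u ∈ unitary R) (h : u * a * star u = u * b * star u) : a = b := by
  have hsu := Unitary.star_mul_self_of_mem hu
  calc a = star u * u * a * (star u * u) := by rw [hsu, one_mul, mul_one]
    _ = star u * (u * a * star u) * u := by simp only [mul_assoc]
    _ = star u * (u * b * star u) * u := by rw [h]
    _ = b := by simp only [← mul_assoc, hsu, one_mul]; rw [mul_assoc, hsu, mul_one]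

lemma isIdempotentElem_mul_mul_star {R : Type*} [Monoid R] [Star R] {u p : R}
    (hu : star u * u = 1) (hp : IsIdempotentElem p) : IsIdempotentElem (u * p * star u) := by
  calc u * p * star u * (u * p * star u) = u * (p * (star u * u) * p) * star u := by
        simp only [mul_assoc]
    _ = u * p * star u := by rw [hu, mul_one, hp.eq]

lemma isIdempotentElem_P0 : IsIdempotentElem P0 := by
  ext i j; fin_cases i <;> fin_cases j <;> simp [P0]

lemma trace_P0 : P0.trace = 1 := by
  simp [P0, trace_fin_two]

lemma σx_mul_mul_σx (p q r s : ℂ) : σx * !![p, q; r, s] * σx = !![s, r; q, p] := by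
  simp [σx]

lemma eq_Pplus_or_Pminus_of_isIdempotentElem {ρ : Matrix (Fin 2) (Fin 2) ℂ}
    (hρ : IsIdempotentElem ρ) (htr : ρ.trace = 1) (hσ : σx * ρ * σx = ρ) :
    ρ = Pplus ∨ ρ = Pminus := by
  obtain ⟨p, q, r, s, rfl⟩ : ∃ p q r s, ρ = !![p, q; r, s] := ⟨_, _, _, _, ρ.eta_fin_two⟩
  rw [σx_mul_mul_σx] at hσ
  simp only [IsIdempotentElem, mul_fin_two, trace_fin_two, of_apply, cons_val', cons_val_zero,
    cons_val_one, cons_val_fin_one, EmbeddingLike.apply_eq_iff_eq, vecCons_inj, and_true]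
    at hρ htr hσ
  obtain ⟨⟨rfl, rfl⟩, -⟩ := hσ
  obtain ⟨⟨hidem, -⟩, -⟩ := hρ
  have hs : s = 1 / 2 := by linear_combination htr / 2
  have hr : r * r = 1 / 2 * (1 / 2) := by linear_combination hidem - (s - 1 / 2) * hs
  rcases mul_self_eq_mul_self_iff.mp hr with rfl | rfl
  · left; simp [Pplus, hs]
  · right; simp [Pminus, hs]

theorem winning_strategy_forces_plus_or_minus
    (V₁ V₃ : Matrix (Fin 2) (Fin 2) ℂ)
    (hV₁ : V₁ ∈ Matrix.unitaryGroup (Fin 2) ℂ)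
    (hV₃ : V₃ ∈ Matrix.unitaryGroup (Fin 2) ℂ)
    (h1 : V₃ * V₁ * P0 * V₁ᴴ * V₃ᴴ = P0)
    (h2 : V₃ * σx * V₁ * P0 * V₁ᴴ * σx * V₃ᴴ = P0) :
    σx * V₁ * P0 * V₁ᴴ * σx = V₁ * P0 * V₁ᴴ ∧
    (V₁ * P0 * V₁ᴴ = Pplus ∨ V₁ * P0 * V₁ᴴ = Pminus) := by
  have hσ : σx * V₁ * P0 * V₁ᴴ * σx = V₁ * P0 * V₁ᴴ := by
    refine eq_of_conj_eq_conj_of_mem_unitary hV₃ ?_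
    simp only [star_eq_conjTranspose, mul_assoc] at h1 h2 ⊢
    rw [h1, h2]
  have hidem : IsIdempotentElem (V₁ * P0 * V₁ᴴ) :=
    isIdempotentElem_mul_mul_star (Unitary.star_mul_self_of_mem hV₁) isIdempotentElem_P0
  have htr : (V₁ * P0 * V₁ᴴ).trace = 1 := by
    rw [trace_mul_cycle, ← star_eq_conjTranspose, Unitary.star_mul_self_of_mem hV₁, one_mul,
      trace_P0]
  refine ⟨hσ, eq_Pplus_or_Pminus_of_isIdempotentElem hidem htr ?_⟩
  simpa only [mul_assoc] using hσ
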